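/- arXiv:2303.08392 — 2 statements merged into one kernel-verified Lean document; each statement's English description precedes it below -/
import Mathlib

section
/- For every β > 0, every configuration σ ∈ Ω, and every x ∈ V, the Digital Annealer spin-flip probability satisfies the two-sided bound (1/|V|) · e^{-β [H(σ^x) - H(σ)]^+} ≤ P_β^{DA}(σ, σ^x) ≤ e^{-β [H(σ^x) - H(σ)]^+}, where [a]^+ = max{a, 0}. In particular, P_β^{DA}(σ, σ^x) > 0 for every σ and x, and P_β^{DA}(σ, σ^x) is at least the single-site Metropolis transition probability (1/|V|) e^{-β E_x(σ)^+}. -/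
open Finset Filter
open scoped Classical

noncomputable section

/-- The real spin value of a Boolean spin: `true ↦ +1`, `false ↦ -1`. -/
def spin (b : Bool) : ℝ := if b then 1 else -1

variable {V : Type*} [Fintype V] [DecidableEq V]

/-- The configuration obtained from `σ` by flipping the spin at `x`. -/
def flipConf (σ : V → Bool) (x : V) : V → Bool := Function.update σ x (!(σ x))

/-- The Ising Hamiltonian with couplings `J` and external fields `h`. -/
def Ham (J : V → V → ℝ) (h : V → ℝ) (σ : V → Bool) : ℝ :=
  -(1 / 2) * ∑ x : V, ∑ y : V, J x y * spin (σ x) * spin (σ y)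
    - ∑ x : V, h x * spin (σ x)

/-- `Ecost J h x σ = H(σ^x) - H(σ)`, the energetic cost of flipping the spin at `x`. -/
def Ecost (J : V → V → ℝ) (h : V → ℝ) (x : V) (σ : V → Bool) : ℝ :=
  Ham J h (flipConf σ x) - Ham J h σ

/-- Metropolis acceptance probability `exp(-β E_y(σ)^+)`. -/
def acc (J : V → V → ℝ) (h : V → ℝ) (β : ℝ) (σ : V → Bool) (y : V) : ℝ :=
  Real.exp (-β * max (Ecost J h y σ) 0)

/-- The Digital Annealer transition matrix. -/
def Pda (J : V → V → ℝ) (h : V → ℝ) (β : ℝ) (σ τ : V → Bool) : ℝ :=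
  if τ = σ then ∏ y : V, (1 - acc J h β σ y)
  else ∑ x ∈ Finset.univ.filter (fun x => τ = flipConf σ x),
        ∑ S ∈ Finset.univ.powerset.filter (fun S : Finset V => x ∈ S),
          ((S.card : ℝ))⁻¹ * (∏ y ∈ S, acc J h β σ y) * ∏ y ∈ Sᶜ, (1 - acc J h β σ y)

/-- The Gibbs distribution at inverse temperature `β`. -/
def gibbs (J : V → V → ℝ) (h : V → ℝ) (β : ℝ) (σ : V → Bool) : ℝ :=
  Real.exp (-β * Ham J h σ) / ∑ τ : V → Bool, Real.exp (-β * Ham J h τ)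

/-- The quantity `R(σ, σ^x)` from the paper. -/
def Rw (J : V → V → ℝ) (h : V → ℝ) (β : ℝ) (σ : V → Bool) (x : V) : ℝ :=
  ∑ S ∈ (Finset.univ.erase x).powerset,
    ((S.card : ℝ) + 1)⁻¹ * (∏ y ∈ S, acc J h β σ y) *
      ∏ y ∈ (Finset.univ.erase x) \ S, (1 - acc J h β σ y)

/-- `τ` is reachable from `σ` at height `E`. -/
def Reachable (H : (V → Bool) → ℝ) (E : ℝ) (σ τ : V → Bool) : Prop :=
  (σ = τ ∧ H σ ≤ E) ∨
    ∃ n : ℕ, 1 ≤ n ∧ ∃ p : ℕ → (V → Bool), p 0 = σ ∧ p n = τ ∧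
      (∀ k, 1 ≤ k → k ≤ n → ∃ x, p k = flipConf (p (k - 1)) x) ∧
      (∀ i ≤ n, H (p i) ≤ E)

/-- `σ` is a local minimum of `H`. -/
def IsLocMin (H : (V → Bool) → ℝ) (σ : V → Bool) : Prop :=
  ¬ ∃ τ, H τ < H σ ∧ Reachable H (H σ) σ τ

/-- `σ` is a ground state (global minimum) of `H`. -/
def IsGround (H : (V → Bool) → ℝ) (σ : V → Bool) : Prop := ∀ τ, H σ ≤ H τ

/-- The depth of a local minimum which is not a ground state: the smallest `E > 0` such
that some strictly lower state is reachable from `σ` at height `H(σ) + E`. -/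
def depth (H : (V → Bool) → ℝ) (σ : V → Bool) : ℝ :=
  sInf {E : ℝ | 0 < E ∧ ∃ τ, H τ < H σ ∧ Reachable H (H σ + E) σ τ}

/-- `γ*`: the maximum of the depths of the local minima of `H` that are not ground
states (`0` if every local minimum is a ground state). -/
def gammaStar (H : (V → Bool) → ℝ) : ℝ :=
  sSup ({0} ∪ {d : ℝ | ∃ σ, IsLocMin H σ ∧ ¬ IsGround H σ ∧ d = depth H σ})

end


section AuxPda
variable {V : Type*} [Fintype V] [DecidableEq V]

lemma flipConf_ne (σ : V → Bool) (x : V) : flipConf σ x ≠ σ := by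
  intro hco
  have := congrFun hco x
  simp [flipConf] at this

lemma flipConf_inj (σ : V → Bool) {x y : V} (hxy : flipConf σ x = flipConf σ y) : x = y := by
  by_contra hne
  have := congrFun hxy y
  simp [flipConf, Function.update_apply, Ne.symm hne] at this

lemma acc_pos (J : V → V → ℝ) (h : V → ℝ) (β : ℝ) (σ : V → Bool) (y : V) :
    0 < acc J h β σ y := Real.exp_pos _

lemma acc_le_one (J : V → V → ℝ) (h : V → ℝ) {β : ℝ} (hβ : 0 < β) (σ : V → Bool) (y : V) :
    acc J h β σ y ≤ 1 := by
  rw [acc, Real.exp_le_one_iff]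
  have : 0 ≤ β * max (Ecost J h y σ) 0 := mul_nonneg hβ.le (le_max_right _ _)
  linarith

lemma Pda_flip_eq (J : V → V → ℝ) (h : V → ℝ) (β : ℝ) (σ : V → Bool) (x : V) :
    Pda J h β σ (flipConf σ x) = acc J h β σ x * Rw J h β σ x := by
  rw [Pda, if_neg (flipConf_ne σ x)]
  have hfil : Finset.univ.filter (fun x' => flipConf σ x = flipConf σ x') = {x} := by
    ext y
    simp only [mem_filter, mem_univ, true_and, mem_singleton]
    constructor
    · intro hy; exact (flipConf_inj σ hy).symm
    · rintro rfl; rfl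
  rw [hfil, Finset.sum_singleton, Rw, Finset.mul_sum]
  refine Finset.sum_nbij' (fun S => S.erase x) (fun T => insert x T) ?_ ?_ ?_ ?_ ?_
  · intro S hS
    simp only [mem_filter, mem_powerset] at hS
    simp only [mem_powerset]
    intro y hy
    rw [Finset.mem_erase] at hy ⊢
    exact ⟨hy.1, mem_univ _⟩
  · intro T hT
    simp only [mem_powerset] at hT
    simp only [mem_filter, mem_powerset]
    exact ⟨Finset.subset_univ _, Finset.mem_insert_self _ _⟩
  · intro S hS
    simp only [mem_filter, mem_powerset] at hS
    exact Finset.insert_erase hS.2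
  · intro T hT
    simp only [mem_powerset] at hT
    refine Finset.erase_insert ?_
    intro hx
    exact (Finset.mem_erase.mp (hT hx)).1 rfl
  · intro S hS
    simp only [mem_filter, mem_powerset] at hS
    have hx : x ∈ S := hS.2
    have hcard : S.card = (S.erase x).card + 1 := (Finset.card_erase_add_one hx).symm
    have hprod : ∏ y ∈ S, acc J h β σ y = acc J h β σ x * ∏ y ∈ S.erase x, acc J h β σ y :=
      (Finset.mul_prod_erase S _ hx).symm
    have hcompl : Sᶜ = (Finset.univ.erase x) \ (S.erase x) := by
      ext y
      simp only [Finset.mem_compl, Finset.mem_sdiff, Finset.mem_erase, mem_univ, and_true,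
        true_and]
      constructor
      · intro hy
        refine ⟨fun hyx => hy (hyx ▸ hx), fun hc => hy hc.2⟩
      · intro hy hyS
        exact (hy.2 ⟨hy.1, hyS⟩)
    rw [hcard, hprod, hcompl]
    push_cast
    ring

lemma Rw_bounds (J : V → V → ℝ) (h : V → ℝ) {β : ℝ} (hβ : 0 < β) (σ : V → Bool) (x : V) :
    ((Fintype.card V : ℝ))⁻¹ ≤ Rw J h β σ x ∧ Rw J h β σ x ≤ 1 := by
  set A := Finset.univ.erase x with hA
  have hcardA : A.card + 1 = Fintype.card V := by
    rw [hA, Finset.card_erase_of_mem (mem_univ x), Finset.card_univ]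
    have : 1 ≤ Fintype.card V := Fintype.card_pos_iff.mpr ⟨x⟩
    omega
  have hterm_nonneg : ∀ T ∈ A.powerset,
      0 ≤ (∏ y ∈ T, acc J h β σ y) * ∏ y ∈ A \ T, (1 - acc J h β σ y) := by
    intro T _
    refine mul_nonneg (Finset.prod_nonneg fun y _ => (acc_pos J h β σ y).le)
      (Finset.prod_nonneg fun y _ => by linarith [acc_le_one J h hβ σ y])
  have hsum1 : ∑ T ∈ A.powerset,
      (∏ y ∈ T, acc J h β σ y) * ∏ y ∈ A \ T, (1 - acc J h β σ y) = 1 := by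
    rw [← Finset.prod_add]
    simp
  have hcardpos : (0:ℝ) < Fintype.card V := by
    exact_mod_cast Fintype.card_pos_iff.mpr ⟨x⟩
  constructor
  · calc ((Fintype.card V : ℝ))⁻¹
        = ∑ T ∈ A.powerset, ((Fintype.card V : ℝ))⁻¹ *
            ((∏ y ∈ T, acc J h β σ y) * ∏ y ∈ A \ T, (1 - acc J h β σ y)) := by
          rw [← Finset.mul_sum, hsum1, mul_one]
      _ ≤ Rw J h β σ x := by
          rw [Rw]
          refine Finset.sum_le_sum fun T hT => ?_
          rw [mul_assoc]
          refine mul_le_mul_of_nonneg_right ?_ (hterm_nonneg T hT)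
          refine inv_anti₀ (by positivity) ?_
          have h1 : T.card ≤ A.card :=
            Finset.card_le_card (Finset.mem_powerset.mp hT)
          have h2 : T.card + 1 ≤ Fintype.card V := by omega
          exact_mod_cast h2
  · calc Rw J h β σ x
        ≤ ∑ T ∈ A.powerset,
            (∏ y ∈ T, acc J h β σ y) * ∏ y ∈ A \ T, (1 - acc J h β σ y) := by
          rw [Rw]
          refine Finset.sum_le_sum fun T hT => ?_
          rw [mul_assoc]
          refine mul_le_of_le_one_left (hterm_nonneg T hT) ?_
          have h1 : (1:ℝ) ≤ (T.card : ℝ) + 1 := by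
            have := Nat.cast_nonneg (α := ℝ) T.card; linarith
          simpa using inv_anti₀ one_pos h1
      _ = 1 := hsum1

end AuxPda

theorem Pda_flip_bounds
    {V : Type*} [Fintype V] [DecidableEq V] [Nonempty V]
    (J : V → V → ℝ) (h : V → ℝ)
    (hJsymm : ∀ x y, J x y = J y x) (hJdiag : ∀ x, J x x = 0)
    (β : ℝ) (hβ : 0 < β) (σ : V → Bool) (x : V) :
    ((Fintype.card V : ℝ))⁻¹ *
        Real.exp (-β * max (Ham J h (flipConf σ x) - Ham J h σ) 0)
      ≤ Pda J h β σ (flipConf σ x)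
    ∧ Pda J h β σ (flipConf σ x)
      ≤ Real.exp (-β * max (Ham J h (flipConf σ x) - Ham J h σ) 0)
    ∧ 0 < Pda J h β σ (flipConf σ x)
    ∧ ((Fintype.card V : ℝ))⁻¹ * Real.exp (-β * max (Ecost J h x σ) 0)
      ≤ Pda J h β σ (flipConf σ x) := by
  have hE : Ecost J h x σ = Ham J h (flipConf σ x) - Ham J h σ := rfl
  have hP : Pda J h β σ (flipConf σ x) = acc J h β σ x * Rw J h β σ x :=
    Pda_flip_eq J h β σ x
  have hacc : acc J h β σ x = Real.exp (-β * max (Ham J h (flipConf σ x) - Ham J h σ) 0) := by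
    rw [acc, hE]
  obtain ⟨hRl, hRu⟩ := Rw_bounds J h hβ σ x
  have hax : 0 < acc J h β σ x := acc_pos J h β σ x
  have hcardpos : (0:ℝ) < Fintype.card V := by
    exact_mod_cast Fintype.card_pos
  refine ⟨?_, ?_, ?_, ?_⟩
  · rw [hP, ← hacc, mul_comm]
    exact mul_le_mul_of_nonneg_left hRl hax.le
  · rw [hP, ← hacc]
    calc acc J h β σ x * Rw J h β σ x ≤ acc J h β σ x * 1 :=
          mul_le_mul_of_nonneg_left hRu hax.le
      _ = acc J h β σ x := mul_one _
  · rw [hP]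
    exact mul_pos hax (lt_of_lt_of_le (by positivity) hRl)
  · rw [hP, mul_comm]
    have : Real.exp (-β * max (Ecost J h x σ) 0) = acc J h β σ x := rfl
    rw [this]
    exact mul_le_mul_of_nonneg_left hRl hax.le
end

section
/- With the single-spin-flip neighborhood structure on Ω and an arbitrary function H : Ω → ℝ, every local minimum σ of H that is not a global minimum, with depth d, is contained in the bottom of a cup of depth d: there exists a cup C ⊆ Ω with σ ∈ B(C) and d(C) = d. -/
open Finset Filter
open scoped Classical

variable {V : Type*} [Fintype V] [DecidableEq V]

/-- A set `C` of configurations is a cup if for some height `E`, `C` equals the set of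
states reachable from any of its elements at height `E`. -/
def IsCup (H : (V → Bool) → ℝ) (C : Set (V → Bool)) : Prop :=
  ∃ E : ℝ, ∀ σ ∈ C, C = {τ | Reachable H E σ τ}

/-- The boundary of a set of configurations: states outside `C` that are neighbors
(single spin flips) of states in `C`. -/
def cupBoundary (C : Set (V → Bool)) : Set (V → Bool) :=
  {τ | τ ∉ C ∧ ∃ σ ∈ C, ∃ x : V, τ = flipConf σ x}

/-- The bottom of a cup: the set of its states of minimal energy. -/
def cupBottom (H : (V → Bool) → ℝ) (C : Set (V → Bool)) : Set (V → Bool) :=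
  {σ | σ ∈ C ∧ ∀ τ ∈ C, H σ ≤ H τ}

/-- The depth of a cup: the minimal energy on its boundary minus the minimal energy
inside. -/
noncomputable def cupDepth (H : (V → Bool) → ℝ) (C : Set (V → Bool)) : ℝ :=
  sInf (H '' cupBoundary C) - sInf (H '' C)

/-!
Let `m` be the lowest height at which `σ` reaches a strictly lower state, so that the depth of
`σ` is `m - H σ`, and let `E` be the largest energy below `m`. The states reachable from `σ` at
height `E` form a cup `C`, since reachability at a fixed height is an equivalence relation. No
state of `C` lies below `σ`, for otherwise `m ≤ E`. A boundary state lies above `E`, hence at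
height at least `m`, and a path at height `m` from `σ` to a lower state leaves `C` through a
boundary state of energy at most `m`.
-/

section Reachability

variable {V : Type*} [DecidableEq V] {H : (V → Bool) → ℝ} {E F : ℝ} {σ τ : V → Bool}

theorem flipConf_flipConf (σ : V → Bool) (x : V) : flipConf (flipConf σ x) x = σ := by
  funext y
  rcases eq_or_ne y x with rfl | hy
  · simp [flipConf]
  · simp [flipConf, Function.update, hy]

theorem Reachable.refl (h : H σ ≤ E) : Reachable H E σ σ := Or.inl ⟨rfl, h⟩

theorem Reachable.mono (hEF : E ≤ F) (h : Reachable H E σ τ) : Reachable H F σ τ := by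
  rcases h with ⟨rfl, h⟩ | ⟨n, hn, p, h0, hN, hs, hh⟩
  · exact .refl (h.trans hEF)
  · exact .inr ⟨n, hn, p, h0, hN, hs, fun i hi => (hh i hi).trans hEF⟩

theorem Reachable.step (h : Reachable H E σ τ) (x : V) (hx : H (flipConf τ x) ≤ E) :
    Reachable H E σ (flipConf τ x) := by
  rcases h with ⟨rfl, h⟩ | ⟨n, hn, p, h0, hN, hs, hh⟩
  · refine .inr ⟨1, le_rfl, fun k => if k = 0 then σ else flipConf σ x, by simp, by simp,
      fun k hk1 hk2 => ⟨x, by simp [show k = 1 by omega]⟩, fun i hi => ?_⟩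
    interval_cases i
    · simpa using h
    · simpa using hx
  · refine .inr ⟨n + 1, by omega, fun k => if k ≤ n then p k else flipConf τ x,
      by simp [h0], by simp, fun k hk1 hk2 => ?_, fun i hi => ?_⟩
    · by_cases hk : k ≤ n
      · simpa [hk, show k - 1 ≤ n by omega] using hs k hk1 hk
      · obtain rfl : k = n + 1 := by omega
        exact ⟨x, by simp [hN]⟩
    · by_cases hin : i ≤ n
      · simpa [hin] using hh i hin
      · simpa [hin] using hx

theorem Reachable.induction {P : (V → Bool) → Prop} (h : Reachable H E σ τ) (base : P σ)
    (step : ∀ ρ x, Reachable H E σ ρ → H (flipConf ρ x) ≤ E → P ρ → P (flipConf ρ x)) :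
    P τ := by
  rcases h with ⟨rfl, -⟩ | ⟨n, -, p, rfl, rfl, hs, hh⟩
  · exact base
  · suffices ∀ k ≤ n, Reachable H E (p 0) (p k) ∧ P (p k) from (this n le_rfl).2
    intro k hk
    induction k with
    | zero => exact ⟨.refl (hh 0 hk), base⟩
    | succ k ih =>
      obtain ⟨x, hx⟩ := hs (k + 1) (by omega) hk
      rw [Nat.add_sub_cancel] at hx
      obtain ⟨hr, hP⟩ := ih (by omega)
      have hxE : H (flipConf (p k) x) ≤ E := hx ▸ hh (k + 1) hk
      exact hx ▸ ⟨hr.step x hxE, step _ x hr hxE hP⟩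

theorem Reachable.trans {ρ : V → Bool} (h₁ : Reachable H E σ τ) (h₂ : Reachable H E τ ρ) :
    Reachable H E σ ρ :=
  h₂.induction h₁ fun _ x _ hx hρ => hρ.step x hx

theorem Reachable.symm (h : Reachable H E σ τ) : Reachable H E τ σ := by
  rcases h with ⟨rfl, h⟩ | ⟨n, hn, p, h0, hN, hs, hh⟩
  · exact .refl h
  · refine .inr ⟨n, hn, fun k => p (n - k), by simp [hN], by simp [h0], fun k hk1 hk2 => ?_,
      fun i _ => hh (n - i) (by omega)⟩
    obtain ⟨x, hx⟩ := hs (n - k + 1) (by omega) (by omega)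
    rw [Nat.add_sub_cancel] at hx
    refine ⟨x, ?_⟩
    show p (n - k) = flipConf (p (n - (k - 1))) x
    rw [show n - (k - 1) = n - k + 1 by omega, hx, flipConf_flipConf]

theorem reachable_of_forall_le [Fintype V] (hE : ∀ ρ, H ρ ≤ E) (σ τ : V → Bool) :
    Reachable H E σ τ := by
  suffices ∀ s : Finset V, ∀ τ : V → Bool, (∀ x ∉ s, τ x = σ x) → Reachable H E σ τ from
    this Finset.univ τ (by simp)
  intro s
  induction s using Finset.induction_on with
  | empty =>
    intro τ hτ
    obtain rfl : τ = σ := funext fun x => hτ x (Finset.notMem_empty x)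
    exact .refl (hE τ)
  | insert a s _ ih =>
    intro τ hτ
    have hτs : ∀ x ∉ s, x ≠ a → τ x = σ x := fun x hx hxa => hτ x (by simp [hx, hxa])
    by_cases hτa : τ a = σ a
    · exact ih τ fun x hx => if hxa : x = a then hxa ▸ hτa else hτs x hx hxa
    · have h := (ih (flipConf τ a) fun x hx => ?_).step a (hE _)
      · rwa [flipConf_flipConf] at h
      · by_cases hxa : x = a
        · subst hxa
          simpa [flipConf] using (Bool.eq_not_iff.2 (Ne.symm hτa)).symm
        · simpa [flipConf, hxa] using hτs x hx hxa

theorem Reachable.exists_reachable_at_value (h : Reachable H E σ τ) :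
    ∃ ρ, H ρ ≤ E ∧ Reachable H (H ρ) σ τ := by
  rcases h with ⟨rfl, h⟩ | ⟨n, hn, p, h0, hN, hs, hh⟩
  · exact ⟨σ, h, .refl le_rfl⟩
  · obtain ⟨i, hi, hmax⟩ :=
      (Finset.range (n + 1)).exists_max_image (H ∘ p) Finset.nonempty_range_add_one
    exact ⟨p i, hh i (Nat.lt_succ_iff.mp (Finset.mem_range.mp hi)),
      .inr ⟨n, hn, p, h0, hN, hs, fun j hj => hmax j (Finset.mem_range.mpr (by omega))⟩⟩

theorem isCup_setOf_reachable (H : (V → Bool) → ℝ) (E : ℝ) (σ : V → Bool) :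
    IsCup H {τ | Reachable H E σ τ} :=
  ⟨E, fun _ hρ => Set.ext fun _ => ⟨hρ.symm.trans, hρ.trans⟩⟩

theorem lt_of_mem_cupBoundary_setOf_reachable
    (hτ : τ ∈ cupBoundary {τ | Reachable H E σ τ}) : E < H τ := by
  obtain ⟨hτC, ρ, hρ, x, rfl⟩ := hτ
  exact lt_of_not_ge fun hle => hτC (Reachable.step hρ x hle)

theorem Reachable.exists_mem_cupBoundary {C : Set (V → Bool)} (h : Reachable H E σ τ)
    (hσ : σ ∈ C) (hτ : τ ∉ C) : ∃ ρ ∈ cupBoundary C, H ρ ≤ E := by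
  refine h.induction (P := fun ρ => ρ ∉ C → ∃ b ∈ cupBoundary C, H b ≤ E) (absurd hσ) ?_ hτ
  intro ρ x _ hx ih hρx
  by_cases hρ : ρ ∈ C
  · exact ⟨_, ⟨hρx, ρ, hρ, x, rfl⟩, hx⟩
  · exact ih hρ

def escapeLevels (H : (V → Bool) → ℝ) (σ : V → Bool) : Set ℝ :=
  {F | ∃ τ, H τ < H σ ∧ Reachable H F σ τ}

theorem IsLocMin.lt_of_mem_escapeLevels (hmin : IsLocMin H σ) (hF : F ∈ escapeLevels H σ) :
    H σ < F := by
  obtain ⟨τ, hτ, hr⟩ := hF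
  exact lt_of_not_ge fun hle => hmin ⟨τ, hτ, hr.mono hle⟩

theorem exists_isLeast_escapeLevels [Fintype V] (hng : ¬ IsGround H σ) :
    ∃ m, IsLeast (escapeLevels H σ) m := by
  obtain ⟨τ, hτ⟩ : ∃ τ, H τ < H σ := by simpa [IsGround] using hng
  obtain ⟨ρmax, hρmax⟩ := Finite.exists_max H
  have : Nonempty {ρ // H ρ ∈ escapeLevels H σ} :=
    ⟨⟨ρmax, τ, hτ, reachable_of_forall_le hρmax σ τ⟩⟩
  obtain ⟨⟨ρ, hρ⟩, hmin⟩ := Finite.exists_min fun ρ : {ρ // H ρ ∈ escapeLevels H σ} => H ρ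
  refine ⟨H ρ, hρ, fun F ⟨τ, hτ, hr⟩ => ?_⟩
  obtain ⟨ρ', hρ'F, hr'⟩ := hr.exists_reachable_at_value
  exact (hmin ⟨ρ', τ, hτ, hr'⟩).trans hρ'F

theorem depth_eq_of_isLeast_escapeLevels {m : ℝ} (hσm : H σ < m)
    (hm : IsLeast (escapeLevels H σ) m) : depth H σ = m - H σ := by
  have hlevels : {E | 0 < E ∧ H σ + E ∈ escapeLevels H σ} = Set.Ici (m - H σ) := by
    ext E
    refine ⟨fun ⟨_, hE⟩ => Set.mem_Ici.2 (by linarith [hm.2 hE]), fun hE => ?_⟩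
    have hmE : m ≤ H σ + E := by linarith [Set.mem_Ici.mp hE]
    obtain ⟨τ, hτ, hr⟩ := hm.1
    exact ⟨by linarith, τ, hτ, hr.mono hmE⟩
  show sInf {E | 0 < E ∧ H σ + E ∈ escapeLevels H σ} = _
  rw [hlevels, csInf_Ici]

theorem exists_cup_of_isLeast_escapeLevels [Fintype V] {m : ℝ} (hσm : H σ < m)
    (hm : IsLeast (escapeLevels H σ) m) :
    ∃ C, IsCup H C ∧ σ ∈ cupBottom H C ∧ cupDepth H C = m - H σ := by
  have : Nonempty {ρ // H ρ < m} := ⟨⟨σ, hσm⟩⟩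
  obtain ⟨⟨ρE, hρE⟩, hgap⟩ := Finite.exists_max fun ρ : {ρ // H ρ < m} => H ρ
  set C := {τ | Reachable H (H ρE) σ τ}
  have hσC : σ ∈ C := .refl (hgap ⟨σ, hσm⟩)
  have hbot : ∀ τ ∈ C, H σ ≤ H τ := fun τ hτ =>
    le_of_not_gt fun hlt => (hm.2 ⟨τ, hlt, hτ⟩).not_gt hρE
  have hbd : ∀ τ ∈ cupBoundary C, m ≤ H τ := fun τ hτ =>
    le_of_not_gt fun hlt => (lt_of_mem_cupBoundary_setOf_reachable hτ).not_ge (hgap ⟨τ, hlt⟩)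
  obtain ⟨τ, hτ, hr⟩ := hm.1
  obtain ⟨ρ, hρ, hρm⟩ := hr.exists_mem_cupBoundary hσC fun hτC => (hbot τ hτC).not_gt hτ
  refine ⟨C, isCup_setOf_reachable H _ σ, ⟨hσC, hbot⟩, ?_⟩
  have hinfC : IsLeast (H '' C) (H σ) := ⟨⟨σ, hσC, rfl⟩, Set.forall_mem_image.2 hbot⟩
  have hinfB : IsLeast (H '' cupBoundary C) m :=
    ⟨⟨ρ, hρ, le_antisymm hρm (hbd ρ hρ)⟩, Set.forall_mem_image.2 hbd⟩
  rw [cupDepth, hinfC.csInf_eq, hinfB.csInf_eq]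

end Reachability

theorem localMin_mem_bottom_of_cup
    (H : (V → Bool) → ℝ) (σ : V → Bool) (d : ℝ)
    (hmin : IsLocMin H σ) (hng : ¬ IsGround H σ) (hd : d = depth H σ) :
    ∃ C : Set (V → Bool), IsCup H C ∧ σ ∈ cupBottom H C ∧ cupDepth H C = d := by
  obtain ⟨m, hm⟩ := exists_isLeast_escapeLevels hng
  have hσm : H σ < m := hmin.lt_of_mem_escapeLevels hm.1
  rw [hd, depth_eq_of_isLeast_escapeLevels hσm hm]
  exact exists_cup_of_isLeast_escapeLevels hσm hm
end
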